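/- For all integers k ≥ 1 and n ≥ 1, σ_{k+1}^odd(n) ≤ ∂^k(σ_{k+1}(n)), where σ_{k+1}(n) denotes the number of square-free positive integers ≤ n with exactly k+1 prime factors and σ_{k+1}^odd(n) denotes the number of odd square-free positive integers ≤ n with exactly k+1 prime factors. -/

import Mathlib

/-- Fold a function `g` over the terms `(a_t, t)` of the unique Macaulay-type
representation `n = C(a_{k+1}, k+1) + ⋯ + C(a_i, i)` with
`a_{k+1} > ⋯ > a_i ≥ i ≥ 1`, computed greedily: at each level `t` (from `k+1`
down), `a_t` is the largest `a` with `C(a, t) ≤` the current remainder. -/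
def macRepFold (g : ℕ → ℕ → ℕ) : ℕ → ℕ → ℕ
  | 0, _ => 0
  | t + 1, n =>
    if n = 0 then 0
    else
      let a := Nat.findGreatest (fun a => Nat.choose a (t + 1) ≤ n) (n + t + 1)
      g a (t + 1) + macRepFold g t (n - Nat.choose a (t + 1))

/-- The combinatorial shadow function `∂_k(n) = Σ_t C(a_t, t - 1)`. -/
def partialLower (k n : ℕ) : ℕ := macRepFold (fun a t => Nat.choose a (t - 1)) (k + 1) n

/-- The combinatorial shadow function `∂^k(n) = Σ_t C(a_t - 1, t)`. -/
def partialUpper (k n : ℕ) : ℕ := macRepFold (fun a t => Nat.choose (a - 1) t) (k + 1) n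

/-- The error function `δ_k(n) = #{t : a_t = t}`. -/
def deltaErr (k n : ℕ) : ℕ := macRepFold (fun a t => if a = t then 1 else 0) (k + 1) n

/-- The function `d^k(n) = Σ_t C(a_t + 1, t)`. -/
def dUpper (k n : ℕ) : ℕ := macRepFold (fun a t => Nat.choose (a + 1) t) (k + 1) n

/-- `σ_k(n)`: the number of square-free positive integers `≤ n` with exactly
`k` prime factors. -/
def sigmaSF (k n : ℕ) : ℕ :=
  ((Finset.Icc 1 n).filter (fun m => Squarefree m ∧ m.primeFactors.card = k)).card

/-- `σ_k^odd(n)`: the number of odd square-free positive integers `≤ n` with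
exactly `k` prime factors. -/
def sigmaSFodd (k n : ℕ) : ℕ :=
  ((Finset.Icc 1 n).filter
    (fun m => Odd m ∧ Squarefree m ∧ m.primeFactors.card = k)).card

/-!
Let `𝒜` be the family of prime-factor sets of the odd square-free `m ≤ n` with `k + 1` prime
factors. Replacing a prime of such an `m` by `2` gives an even square-free number `≤ m` with
`k + 1` prime factors, so `t ↦ insert 2 t` maps the shadow `∂𝒜` injectively into the family of
all square-free `m ≤ n`, disjointly from `𝒜`; hence `|𝒜| + |∂𝒜| ≤ σ_{k+1}(n)`.

By Kruskal–Katona, `|∂𝒜|` is at least the shadow size of the colex initial segment of size `|𝒜|`.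
Writing `|𝒜| - 1 = Σ_{j ≤ k} C(c_j, j + 1)` with `c` strictly increasing, that segment ends at
`{c_0, …, c_k}` and its shadow has `1 + Σ_{j < k} C(c_{j+1}, j + 1)` elements, so
`σ_{k+1}(n) ≥ 1 + Σ_{j ≤ k} C(c_j + 1, j + 1)` by Pascal's rule. Finally `∂^k` is monotone and
sends `1 + Σ_{j ≤ k} C(c_j + 1, j + 1)` to `1 + Σ_{j ≤ k} C(c_j, j + 1) = |𝒜|`.
-/

open Finset
open scoped FinsetFamily

lemma lt_add_add_one_choose (n t : ℕ) : n < (n + t + 1).choose (t + 1) := by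
  calc n < (n + 1).choose n := by simp
    _ ≤ (n + (t + 1)).choose n := Nat.choose_le_choose n (by omega)
    _ = (n + t + 1).choose (t + 1) := by rw [Nat.choose_symm_add, add_assoc]

lemma exists_choose_le_lt_choose (t n : ℕ) :
    ∃ a, t ≤ a ∧ a.choose (t + 1) ≤ n ∧ n < (a + 1).choose (t + 1) := by
  have hex : ∃ a, n < (a + 1).choose (t + 1) := ⟨n + t, lt_add_add_one_choose n t⟩
  refine ⟨Nat.find hex, ?_, ?_, Nat.find_spec hex⟩
  · by_contra! h
    have := Nat.find_spec hex
    rw [Nat.choose_eq_zero_of_lt (by omega)] at this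
    omega
  · rcases Nat.eq_zero_or_pos (Nat.find hex) with h | h
    · rw [h, Nat.choose_zero_succ]
      exact Nat.zero_le n
    · have := Nat.find_min hex (show Nat.find hex - 1 < Nat.find hex by omega)
      rwa [Nat.sub_add_cancel h, not_lt] at this

lemma macRepFold_zero_right (g : ℕ → ℕ → ℕ) (t : ℕ) : macRepFold g t 0 = 0 := by
  cases t <;> rfl

lemma macRepFold_succ_of_choose_le_of_lt (g : ℕ → ℕ → ℕ) {t n a : ℕ} (hn : n ≠ 0)
    (ha : a.choose (t + 1) ≤ n) (hn' : n < (a + 1).choose (t + 1)) :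
    macRepFold g (t + 1) n = g a (t + 1) + macRepFold g t (n - a.choose (t + 1)) := by
  have hgreatest : Nat.findGreatest (fun a => a.choose (t + 1) ≤ n) (n + t + 1) = a := by
    refine Nat.findGreatest_eq_iff.2 ⟨?_, fun _ => ha, fun b hab _ hb => ?_⟩
    · by_contra! h
      have := Nat.choose_le_choose (t + 1) h.le
      have := lt_add_add_one_choose n t
      omega
    · have := Nat.choose_le_choose (t + 1) (show a + 1 ≤ b from hab)
      exact absurd hb (by omega)
  simp only [macRepFold, hn, if_false, hgreatest]

lemma macRepFold_succ_choose (g : ℕ → ℕ → ℕ) {t m : ℕ} (h : t + 1 ≤ m) :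
    macRepFold g (t + 1) (m.choose (t + 1)) = g m (t + 1) := by
  have hpos := Nat.choose_pos h
  have hlt : m.choose (t + 1) < (m + 1).choose (t + 1) := by
    rw [Nat.choose_succ_succ' m t]
    have := Nat.choose_pos (show t ≤ m by omega)
    omega
  rw [macRepFold_succ_of_choose_le_of_lt g hpos.ne' le_rfl hlt, Nat.sub_self,
    macRepFold_zero_right, add_zero]

lemma macRepFold_choose_pred_choose_le (t a : ℕ) :
    macRepFold (fun a t => Nat.choose (a - 1) t) t (a.choose t) ≤ (a - 1).choose t := by
  rcases t with _ | t
  · exact Nat.zero_le _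
  rcases Nat.lt_or_ge a (t + 1) with h | h
  · rw [Nat.choose_eq_zero_of_lt h, macRepFold_zero_right]
    exact Nat.zero_le _
  · exact (macRepFold_succ_choose _ h).le

lemma monotone_macRepFold_choose_pred (t : ℕ) :
    Monotone (macRepFold (fun a t => Nat.choose (a - 1) t) t) := by
  induction t with
  | zero => exact fun _ _ _ => le_rfl
  | succ t ih =>
    refine monotone_nat_of_le_succ fun n => ?_
    rcases Nat.eq_zero_or_pos n with rfl | hn
    · rw [macRepFold_zero_right]
      exact Nat.zero_le _
    obtain ⟨a, hta, ha, hna⟩ := exists_choose_le_lt_choose t n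
    rw [macRepFold_succ_of_choose_le_of_lt _ hn.ne' ha hna]
    rcases (show n + 1 ≤ (a + 1).choose (t + 1) from hna).lt_or_eq with hlt | heq
    · rw [macRepFold_succ_of_choose_le_of_lt _ (Nat.succ_ne_zero n) (by omega) hlt]
      exact Nat.add_le_add_left (ih (by omega)) _
    · -- `n + 1` is the single binomial `C(a + 1, t + 1)`, so the remainder of `n` is `C(a, t) - 1`
      have ha1 : 1 ≤ a := by
        by_contra! h0
        obtain ⟨rfl, rfl⟩ : a = 0 ∧ t = 0 := by omega
        simp only [zero_add, Nat.choose_self] at hna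
        omega
      have hpascal := Nat.choose_succ_succ' a t
      have hpascal' := Nat.choose_succ_succ' (a - 1) t
      rw [Nat.sub_add_cancel ha1] at hpascal'
      rw [heq, macRepFold_succ_choose _ (by omega), Nat.add_sub_cancel]
      have := (ih (show n - a.choose (t + 1) ≤ a.choose t by omega)).trans
        (macRepFold_choose_pred_choose_le t a)
      omega

lemma partialUpper_mono (k : ℕ) : Monotone (partialUpper k) :=
  monotone_macRepFold_choose_pred (k + 1)

def cascadeSum (c : ℕ → ℕ) (r : ℕ) : ℕ := ∑ j ∈ range r, (c j).choose (j + 1)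

lemma cascadeSum_succ (c : ℕ → ℕ) (r : ℕ) :
    cascadeSum c (r + 1) = cascadeSum c r + (c r).choose (r + 1) :=
  sum_range_succ _ _

lemma cascadeSum_lt_choose {c : ℕ → ℕ} (hc : StrictMono c) (r : ℕ) :
    cascadeSum c r < (c r).choose r := by
  induction r with
  | zero => simp [cascadeSum]
  | succ r ih =>
    calc cascadeSum c (r + 1) < (c r).choose r + (c r).choose (r + 1) := by
          rw [cascadeSum_succ]; omega
      _ = (c r + 1).choose (r + 1) := (Nat.choose_succ_succ' _ _).symm
      _ ≤ (c (r + 1)).choose (r + 1) := Nat.choose_le_choose _ (hc (Nat.lt_succ_self r))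

lemma choose_le_cascadeSum (c : ℕ → ℕ) (r : ℕ) : (c r).choose (r + 1) ≤ cascadeSum c (r + 1) := by
  rw [cascadeSum_succ]
  exact Nat.le_add_left _ _

lemma exists_strictMono_cascadeSum_eq (r m : ℕ) :
    ∃ c : ℕ → ℕ, StrictMono c ∧ cascadeSum c (r + 1) = m := by
  induction r generalizing m with
  | zero => exact ⟨fun j => m + j, strictMono_id.const_add m, by simp [cascadeSum]⟩
  | succ r ih =>
    obtain ⟨a, -, ha, hma⟩ := exists_choose_le_lt_choose (r + 1) m
    obtain ⟨c, hc, hcm⟩ := ih (m - a.choose (r + 1 + 1))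
    -- the greedy remainder is below `C(a, r + 1)`, which forces `c r < a`
    have hca : c r < a := by
      by_contra! h
      have := Nat.choose_le_choose (r + 1) h
      have := choose_le_cascadeSum c r
      rw [Nat.choose_succ_succ'] at hma
      omega
    refine ⟨fun j => if j ≤ r then c j else a + (j - (r + 1)), ?_, ?_⟩
    · refine strictMono_nat_of_lt_succ fun j => ?_
      rcases Nat.lt_trichotomy j r with h | rfl | h
      · simp only [if_pos h.le, if_pos (show j + 1 ≤ r by omega)]
        exact hc (Nat.lt_succ_self j)
      · simp [hca]
      · simp only [if_neg (show ¬ j ≤ r by omega), if_neg (show ¬ j + 1 ≤ r by omega)]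
        omega
    · have hlow : cascadeSum (fun j => if j ≤ r then c j else a + (j - (r + 1))) (r + 1)
          = cascadeSum c (r + 1) :=
        sum_congr rfl fun j hj => by simp only [if_pos (Nat.lt_succ_iff.mp (mem_range.mp hj))]
      rw [cascadeSum_succ, hlow, hcm, if_neg (by omega), Nat.sub_self, add_zero]
      omega

lemma cascadeSum_add_one (c : ℕ → ℕ) (r : ℕ) :
    cascadeSum (fun j => c j + 1) (r + 1)
      = cascadeSum c (r + 1) + (1 + cascadeSum (fun j => c (j + 1)) r) := by
  have hlow : ∑ j ∈ range (r + 1), (c j).choose j = 1 + cascadeSum (fun j => c (j + 1)) r := by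
    rw [sum_range_succ', Nat.choose_zero_right, add_comm]
    rfl
  simp only [cascadeSum, Nat.choose_succ_succ', sum_add_distrib, hlow]
  ring

lemma partialUpper_one_add_cascadeSum {c : ℕ → ℕ} (hc : StrictMono c) (k : ℕ) :
    partialUpper k (1 + cascadeSum (fun j => c j + 1) (k + 1)) = 1 + cascadeSum c (k + 1) := by
  induction k with
  | zero =>
    have h : 1 + cascadeSum (fun j => c j + 1) 1 = (c 0 + 2).choose 1 := by
      simp only [cascadeSum, range_one, sum_singleton, zero_add, Nat.choose_one_right]
      omega
    rw [h, partialUpper, macRepFold_succ_choose _ (by omega)]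
    simp [cascadeSum, add_comm]
  | succ k ih =>
    set X := 1 + cascadeSum (fun j => c j + 1) (k + 1)
    set a := c (k + 1) + 1
    have hXa : X ≤ a.choose (k + 1) := by
      have : cascadeSum (fun j => c j + 1) (k + 1) < a.choose (k + 1) :=
        cascadeSum_lt_choose (fun _ _ h => Nat.add_lt_add_right (hc h) 1) (k + 1)
      omega
    have hka : k + 1 ≤ c (k + 1) := hc.id_le (k + 1)
    have hsplit : 1 + cascadeSum (fun j => c j + 1) (k + 1 + 1) = X + a.choose (k + 1 + 1) := by
      rw [cascadeSum_succ]; ring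
    rw [hsplit]
    rcases hXa.lt_or_eq with hlt | heq
    · have hlt' : X + a.choose (k + 1 + 1) < (a + 1).choose (k + 1 + 1) := by
        rw [Nat.choose_succ_succ' a (k + 1)]; omega
      rw [partialUpper, macRepFold_succ_of_choose_le_of_lt _ (by omega) (by omega) hlt',
        Nat.add_sub_cancel, Nat.add_sub_cancel, ← partialUpper, ih, cascadeSum_succ c (k + 1)]
      ring
    · -- the carry closes up: the lower terms sum to a single binomial
      have hcarry : 1 + cascadeSum c (k + 1) = (c (k + 1)).choose (k + 1) := by
        rw [← ih, heq, partialUpper, macRepFold_succ_choose _ (by omega)]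
        simp [a]
      have hsingle : X + a.choose (k + 1 + 1) = (a + 1).choose (k + 1 + 1) := by
        rw [heq, Nat.choose_succ_succ' a (k + 1)]
      rw [hsingle, partialUpper, macRepFold_succ_choose _ (by omega), cascadeSum_succ c (k + 1),
        ← add_assoc, hcarry]
      simp only [a, Nat.add_sub_cancel]
      exact Nat.choose_succ_succ' _ _

section Colex

open Finset.Colex

variable {α : Type*} [LinearOrder α]

lemma toColex_le_insert_iff_of_notMem {s t : Finset α} {M : α} (hs : ∀ x ∈ s, x < M)
    (hMt : M ∉ t) : toColex t ≤ toColex (insert M s) ↔ ∀ x ∈ t, x < M := by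
  refine ⟨fun h x hx => ?_, fun h => ?_⟩
  · refine (forall_le_mono h (fun y hy => ?_) x hx).lt_of_ne fun hxM => hMt (hxM ▸ hx)
    rcases mem_insert.1 hy with rfl | hy
    exacts [le_rfl, (hs y hy).le]
  · exact (toColex_lt_singleton.2 h).le.trans
      (toColex_le_toColex_of_subset (singleton_subset_iff.2 (mem_insert_self M s)))

lemma insert_le_insert_iff_of_notMem {s u : Finset α} {M : α} (hMs : M ∉ s)
    (hMu : M ∉ u) : toColex (insert M u) ≤ toColex (insert M s) ↔ toColex u ≤ toColex s := by
  have h := toColex_sdiff_le_toColex_sdiff (u := {M}) (s := insert M u) (t := insert M s)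
    (by simp) (by simp)
  rwa [sdiff_singleton_eq_erase, sdiff_singleton_eq_erase, erase_insert hMu,
    erase_insert hMs, Iff.comm] at h

lemma card_initSeg_insert [Fintype α] [LocallyFiniteOrderBot α] {s : Finset α} {M : α}
    (hs : ∀ x ∈ s, x < M) :
    #(initSeg (insert M s)) = (#(Iio M)).choose (#s + 1) + #(initSeg s) := by
  have hMs : M ∉ s := fun h => lt_irrefl M (hs M h)
  have hcard : #(insert M s) = #s + 1 := card_insert_of_notMem hMs
  have hwithout :
      (initSeg (insert M s)).filter (fun t => M ∉ t) = powersetCard (#s + 1) (Iio M) := by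
    ext t
    simp only [mem_filter, mem_initSeg, mem_powersetCard, hcard, subset_iff, mem_Iio]
    constructor
    · rintro ⟨⟨hst, hle⟩, hMt⟩
      exact ⟨(toColex_le_insert_iff_of_notMem hs hMt).1 hle, hst.symm⟩
    · rintro ⟨hlt, hst⟩
      have hMt : M ∉ t := fun h => lt_irrefl M (hlt h)
      exact ⟨⟨hst.symm, (toColex_le_insert_iff_of_notMem hs hMt).2 hlt⟩, hMt⟩
  have hwith : #((initSeg (insert M s)).filter (fun t => M ∈ t)) = #(initSeg s) := by
    have hMu : ∀ u ∈ initSeg s, M ∉ u := fun u hu hM =>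
      lt_irrefl M (forall_lt_mono (mem_initSeg.1 hu).2 hs M hM)
    refine card_nbij' (·.erase M) (insert M) (fun t ht => ?_) (fun u hu => ?_)
      (fun t ht => insert_erase (mem_filter.1 ht).2) (fun u hu => erase_insert (hMu u hu))
    · obtain ⟨ht, hMt⟩ := mem_filter.1 ht
      rw [mem_initSeg, hcard] at ht
      rw [mem_coe, mem_initSeg, card_erase_of_mem hMt, ← ht.1,
        Nat.add_sub_cancel, ← insert_le_insert_iff_of_notMem hMs (notMem_erase M t),
        insert_erase hMt]
      exact ⟨rfl, ht.2⟩
    · have hu' := mem_initSeg.1 hu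
      refine mem_filter.2 ⟨mem_initSeg.2 ⟨?_, ?_⟩, mem_insert_self M u⟩
      · rw [hcard, card_insert_of_notMem (hMu u hu), hu'.1]
      · exact (insert_le_insert_iff_of_notMem hMs (hMu u hu)).2 hu'.2
  rw [← card_filter_add_card_filter_not (s := initSeg (insert M s)) (fun t => M ∈ t), hwithout,
    hwith, card_powersetCard, add_comm]

end Colex

section CascadeSet

open Finset.Colex

variable {N : ℕ} {c : ℕ → ℕ}

def cascadeSet (N : ℕ) (c : ℕ → ℕ) (r : ℕ) : Finset (Fin N) := {x | ∃ j < r, c j = x}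

lemma mem_cascadeSet {r : ℕ} {x : Fin N} : x ∈ cascadeSet N c r ↔ ∃ j < r, c j = x := by
  simp [cascadeSet]

lemma cascadeSet_succ {r : ℕ} (h : c r < N) :
    cascadeSet N c (r + 1) = insert ⟨c r, h⟩ (cascadeSet N c r) := by
  ext x
  simp only [mem_cascadeSet, mem_insert, Nat.lt_succ_iff_lt_or_eq, Fin.ext_iff]
  grind

lemma lt_of_mem_cascadeSet (hc : StrictMono c) {r : ℕ} (h : c r < N) :
    ∀ x ∈ cascadeSet N c r, x < ⟨c r, h⟩ := by
  intro x hx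
  obtain ⟨j, hj, hjx⟩ := mem_cascadeSet.1 hx
  rw [Fin.lt_def, ← hjx]
  exact hc hj

lemma card_cascadeSet (hc : StrictMono c) {r : ℕ} (hN : ∀ j < r, c j < N) :
    #(cascadeSet N c r) = r := by
  induction r with
  | zero => simp [cascadeSet]
  | succ r ih =>
    rw [cascadeSet_succ (hN r r.lt_succ_self), card_insert_of_notMem
      fun h => lt_irrefl _ (lt_of_mem_cascadeSet hc _ _ h), ih fun j hj => hN j (by omega)]

lemma card_initSeg_cascadeSet (hc : StrictMono c) {r : ℕ} (hN : ∀ j < r, c j < N) :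
    #(initSeg (cascadeSet N c r)) = 1 + cascadeSum c r := by
  induction r with
  | zero =>
    have : initSeg (cascadeSet N c 0) = {∅} := by
      ext t
      simp only [cascadeSet, not_lt_zero, false_and, exists_const, filter_false, mem_initSeg,
        card_empty, eq_comm (a := 0), card_eq_zero, toColex_empty, le_bot_iff, mem_singleton,
        and_iff_left_iff_imp]
      rintro rfl
      rfl
    simp [this, cascadeSum]
  | succ r ih =>
    have hN' : ∀ j < r, c j < N := fun j hj => hN j (by omega)
    rw [cascadeSet_succ (hN r r.lt_succ_self), card_initSeg_insert (lt_of_mem_cascadeSet hc _),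
      Fin.card_Iio, card_cascadeSet hc hN', ih hN', cascadeSum_succ]
    ring

lemma cascadeSet_succ_erase_min' (hc : StrictMono c) {r : ℕ} (hN : ∀ j < r + 1, c j < N)
    (hne : (cascadeSet N c (r + 1)).Nonempty) :
    (cascadeSet N c (r + 1)).erase ((cascadeSet N c (r + 1)).min' hne)
      = cascadeSet N (fun j => c (j + 1)) r := by
  have h0 : ⟨c 0, hN 0 r.succ_pos⟩ ∈ cascadeSet N c (r + 1) := mem_cascadeSet.2 ⟨0, r.succ_pos, rfl⟩
  have hmin : (cascadeSet N c (r + 1)).min' hne = ⟨c 0, hN 0 r.succ_pos⟩ := by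
    refine le_antisymm (min'_le _ _ h0) (le_min' _ _ _ fun x hx => ?_)
    obtain ⟨j, -, hjx⟩ := mem_cascadeSet.1 hx
    rw [Fin.le_def, ← hjx]
    exact hc.monotone (Nat.zero_le j)
  ext x
  rw [hmin, mem_erase, mem_cascadeSet, mem_cascadeSet, Nat.exists_lt_succ_left, Ne, Fin.ext_iff]
  constructor
  · rintro ⟨hx0, hx | hx⟩
    exacts [absurd hx.symm hx0, hx]
  · rintro ⟨j, hj, hjx⟩
    refine ⟨fun h => ?_, Or.inr ⟨j, hj, hjx⟩⟩
    exact (hc j.succ_pos).ne (hjx.trans h).symm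

end CascadeSet

open Finset.Colex in
theorem card_le_partialUpper_card_add_card_shadow_fin {N k : ℕ} {𝒜 : Finset (Finset (Fin N))}
    (h𝒜 : (𝒜 : Set (Finset (Fin N))).Sized (k + 1)) :
    #𝒜 ≤ partialUpper k (#𝒜 + #(∂ 𝒜)) := by
  rcases Nat.eq_zero_or_pos #𝒜 with h0 | hpos
  · rw [h0]
    exact Nat.zero_le _
  -- compare `𝒜` with the colex initial segment of the same size, ending at the set `{c 0, …, c k}`
  obtain ⟨c, hc, hcsum⟩ := exists_strictMono_cascadeSum_eq k (#𝒜 - 1)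
  have hN : ∀ j < k + 1, c j < N := by
    have hle : (c k).choose (k + 1) < N.choose (k + 1) := by
      have := h𝒜.card_le
      have := choose_le_cascadeSum c k
      rw [Fintype.card_fin] at *
      omega
    intro j hj
    by_contra! h
    exact (Nat.choose_le_choose (k + 1) (h.trans (hc.monotone (Nat.lt_succ_iff.1 hj)))).not_gt hle
  have hcard : #(cascadeSet N c (k + 1)) = k + 1 := card_cascadeSet hc hN
  have hseg : #(initSeg (cascadeSet N c (k + 1))) = #𝒜 := by
    rw [card_initSeg_cascadeSet hc hN, hcsum]
    omega
  have hKK : #(∂ (initSeg (cascadeSet N c (k + 1)))) ≤ #(∂ 𝒜) := by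
    have hinit := isInitSeg_initSeg (s := cascadeSet N c (k + 1))
    rw [hcard] at hinit
    exact kruskal_katona h𝒜 hseg.le hinit
  have hne : (cascadeSet N c (k + 1)).Nonempty := card_pos.1 (by omega)
  have hshadow :
      #(∂ (initSeg (cascadeSet N c (k + 1)))) = 1 + cascadeSum (fun j => c (j + 1)) k := by
    rw [shadow_initSeg hne, cascadeSet_succ_erase_min' hc hN,
      card_initSeg_cascadeSet (fun _ _ h => hc (Nat.succ_lt_succ h)) fun j hj => hN _ (by omega)]
  calc #𝒜 = 1 + cascadeSum c (k + 1) := by omega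
    _ = partialUpper k (1 + cascadeSum (fun j => c j + 1) (k + 1)) :=
      (partialUpper_one_add_cascadeSum hc k).symm
    _ ≤ partialUpper k (#𝒜 + #(∂ 𝒜)) :=
      partialUpper_mono k (by rw [cascadeSum_add_one]; omega)

lemma shadow_map {α β : Type*} [DecidableEq α] [DecidableEq β] (f : α ↪ β)
    (𝒜 : Finset (Finset α)) :
    ∂ (𝒜.map (mapEmbedding f).toEmbedding) = (∂ 𝒜).map (mapEmbedding f).toEmbedding := by
  ext t
  simp only [mem_shadow_iff, mem_map, RelEmbedding.coe_toEmbedding, mapEmbedding_apply]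
  constructor
  · rintro ⟨_, ⟨s, hs, rfl⟩, b, hb, rfl⟩
    obtain ⟨a, ha, rfl⟩ := mem_map.1 hb
    exact ⟨s.erase a, ⟨s, hs, a, ha, rfl⟩, map_erase f s a⟩
  · rintro ⟨_, ⟨s, hs, a, ha, rfl⟩, rfl⟩
    exact ⟨s.map f, ⟨s, hs, rfl⟩, f a, mem_map_of_mem f ha, (map_erase f s a).symm⟩

theorem card_le_partialUpper_card_add_card_shadow {k : ℕ} {𝒜 : Finset (Finset ℕ)}
    (h𝒜 : (𝒜 : Set (Finset ℕ)).Sized (k + 1)) :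
    #𝒜 ≤ partialUpper k (#𝒜 + #(∂ 𝒜)) := by
  obtain ⟨N, hN⟩ := exists_nat_subset_range (𝒜.sup id)
  have hlt : ∀ s ∈ 𝒜, ∀ x ∈ s, x < N := fun s hs x hx =>
    mem_range.1 (hN (mem_sup.2 ⟨s, hs, hx⟩))
  set 𝒜' : Finset (Finset (Fin N)) := {t | t.map Fin.valEmbedding ∈ 𝒜}
  have hmap : 𝒜'.map (mapEmbedding Fin.valEmbedding).toEmbedding = 𝒜 := by
    ext s
    refine ⟨fun hs => ?_, fun hs => mem_map.2 ⟨s.attachFin (hlt s hs), ?_, ?_⟩⟩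
    · obtain ⟨t, ht, rfl⟩ := mem_map.1 hs
      exact (mem_filter.1 ht).2
    · exact mem_filter.2 ⟨mem_univ _, by rwa [map_valEmbedding_attachFin]⟩
    · exact map_valEmbedding_attachFin _
  have h𝒜' : (𝒜' : Set (Finset (Fin N))).Sized (k + 1) := fun t ht => by
    rw [← card_map Fin.valEmbedding]
    exact h𝒜 (mem_filter.1 ht).2
  rw [← hmap, shadow_map, card_map, card_map]
  exact card_le_partialUpper_card_add_card_shadow_fin h𝒜'

lemma card_add_card_shadow_le {α : Type*} [DecidableEq α] {𝒜 ℬ : Finset (Finset α)} {a : α}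
    (ha : ∀ s ∈ 𝒜, a ∉ s) (h𝒜ℬ : 𝒜 ⊆ ℬ) (hℬ : ∀ t ∈ ∂ 𝒜, insert a t ∈ ℬ) :
    #𝒜 + #(∂ 𝒜) ≤ #ℬ := by
  have ha' : ∀ t ∈ ∂ 𝒜, a ∉ t := fun t ht hat => by
    obtain ⟨s, hs, hts⟩ := exists_subset_of_mem_shadow ht
    exact ha s hs (hts hat)
  have hinj : Set.InjOn (insert a) (∂ 𝒜 : Set (Finset α)) := fun t ht u hu h => by
    rw [← erase_insert (ha' t ht), h, erase_insert (ha' u hu)]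
  have hdisj : Disjoint 𝒜 ((∂ 𝒜).image (insert a)) := disjoint_left.2 fun s hs hs' => by
    obtain ⟨t, -, rfl⟩ := mem_image.1 hs'
    exact ha _ hs (mem_insert_self a t)
  rw [← card_image_of_injOn hinj, ← card_union_of_disjoint hdisj]
  exact card_le_card (union_subset h𝒜ℬ (image_subset_iff.2 hℬ))

lemma exists_squarefree_primeFactors_eq_insert_two_erase {m p : ℕ} (hm : Odd m)
    (hsf : Squarefree m) (hp : p ∈ m.primeFactors) :
    ∃ m' ∈ Icc 1 m, Squarefree m' ∧ m'.primeFactors = insert 2 (m.primeFactors.erase p) := by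
  obtain ⟨hpp, ⟨d, rfl⟩, hm0⟩ := Nat.mem_primeFactors.1 hp
  have hd0 : d ≠ 0 := right_ne_zero_of_mul hm0
  obtain ⟨hpd, -, hsfd⟩ := Nat.squarefree_mul_iff.1 hsf
  have hpfd : p ∉ d.primeFactors := fun h =>
    hpp.one_lt.ne' (hpd.eq_one_of_dvd (Nat.dvd_of_mem_primeFactors h))
  refine ⟨2 * d, mem_Icc.2 ⟨by omega, Nat.mul_le_mul_right d hpp.two_le⟩,
    Nat.squarefree_mul_iff.2 ⟨Nat.coprime_two_left.2 (Nat.odd_mul.1 hm).2,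
      Nat.prime_two.squarefree, hsfd⟩, ?_⟩
  rw [Nat.primeFactors_mul two_ne_zero hd0, Nat.primeFactors_mul hpp.ne_zero hd0,
    Nat.prime_two.primeFactors, hpp.primeFactors, singleton_union, singleton_union,
    erase_insert hpfd]

lemma card_image_primeFactors {s : Finset ℕ} (hs : ∀ m ∈ s, Squarefree m) :
    #(s.image Nat.primeFactors) = #s :=
  card_image_of_injOn fun m hm m' hm' h => by
    rw [← Nat.prod_primeFactors_of_squarefree (hs m hm), h,
      Nat.prod_primeFactors_of_squarefree (hs m' hm')]

lemma insert_two_mem_of_mem_shadow {n r : ℕ} {t : Finset ℕ}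
    (ht : t ∈ ∂ (((Icc 1 n).filter fun m => Odd m ∧ Squarefree m ∧ #m.primeFactors = r).image
      Nat.primeFactors)) :
    insert 2 t ∈ ((Icc 1 n).filter fun m => Squarefree m ∧ #m.primeFactors = r).image
      Nat.primeFactors := by
  obtain ⟨_, hs, p, hp, rfl⟩ := mem_shadow_iff.1 ht
  obtain ⟨m, hm, rfl⟩ := mem_image.1 hs
  obtain ⟨hmn, hodd, hsf, hcard⟩ := by simpa only [mem_filter] using hm
  obtain ⟨m', hm', hsf', hpf'⟩ := exists_squarefree_primeFactors_eq_insert_two_erase hodd hsf hp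
  have h2 : 2 ∉ m.primeFactors.erase p := fun h =>
    hodd.not_two_dvd_nat (Nat.dvd_of_mem_primeFactors (mem_of_mem_erase h))
  refine mem_image.2 ⟨m', mem_filter.2 ⟨?_, hsf', ?_⟩, hpf'⟩
  · exact Icc_subset_Icc_right (mem_Icc.1 hmn).2 hm'
  · rw [hpf', card_insert_of_notMem h2, card_erase_of_mem hp, hcard]
    have := card_pos.2 ⟨p, hp⟩
    omega

theorem sigmaSFodd_le_partialUpper_sigmaSF_general (k n : ℕ) :
    sigmaSFodd (k + 1) n ≤ partialUpper k (sigmaSF (k + 1) n) := by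
  set A := (Icc 1 n).filter fun m => Squarefree m ∧ #m.primeFactors = k + 1
  set Ao := (Icc 1 n).filter fun m => Odd m ∧ Squarefree m ∧ #m.primeFactors = k + 1
  have hA : #(A.image Nat.primeFactors) = sigmaSF (k + 1) n :=
    card_image_primeFactors fun m hm => (mem_filter.1 hm).2.1
  have hAo : #(Ao.image Nat.primeFactors) = sigmaSFodd (k + 1) n :=
    card_image_primeFactors fun m hm => (mem_filter.1 hm).2.2.1
  have hsized : (Ao.image Nat.primeFactors : Set (Finset ℕ)).Sized (k + 1) := by
    intro t ht
    obtain ⟨m, hm, rfl⟩ := mem_image.1 ht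
    exact (mem_filter.1 hm).2.2.2
  have hodd : ∀ s ∈ Ao.image Nat.primeFactors, 2 ∉ s := by
    intro s hs h2
    obtain ⟨m, hm, rfl⟩ := mem_image.1 hs
    exact (mem_filter.1 hm).2.1.not_two_dvd_nat (Nat.dvd_of_mem_primeFactors h2)
  have hsub : Ao.image Nat.primeFactors ⊆ A.image Nat.primeFactors :=
    image_subset_image (monotone_filter_right _ fun _ _ h => h.2)
  rw [← hA, ← hAo]
  exact (card_le_partialUpper_card_add_card_shadow hsized).trans
    (partialUpper_mono k (card_add_card_shadow_le hodd hsub fun t => insert_two_mem_of_mem_shadow))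

/-- Corollary 1.7: `σ_{k+1}^odd(n) ≤ ∂^k(σ_{k+1}(n))` for all `k ≥ 1`. -/
theorem sigmaSFodd_le_partialUpper_sigmaSF (k n : ℕ) (hk : 1 ≤ k) (hn : 1 ≤ n) :
    sigmaSFodd (k + 1) n ≤ partialUpper k (sigmaSF (k + 1) n) :=
  sigmaSFodd_le_partialUpper_sigmaSF_general k n
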